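/- arXiv:2602.00572 — 4 statements merged into one kernel-verified Lean document; each statement's English description precedes it below -/
import Mathlib

section
/- Let k ≥ 2 and N ≥ 1 be integers, let D > 0 not be a perfect square, and let Q = [Na, b, c] with a,b,c ∈ ℤ, b² - 4Nac = D, and ac > 0. Then for every integer n with 0 ≤ n ≤ 2k - 2, the integral over the real line ∫_{-∞}^{∞} tⁿ / (-Nat² + bit + c)^k dt equals 0. -/
open Complex MeasureTheory Filter Finset Polynomial Topology

lemma aux_ne {z : ℂ} (hz : z.im ≠ 0) (t : ℝ) : (t:ℂ) - z ≠ 0 := by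
  intro h
  apply hz
  have := congrArg Complex.im h
  simpa using this.symm

lemma aux_inv_tendsto (z : ℂ) {l : Filter ℝ} (hl : Tendsto (fun t : ℝ => |t|) l atTop) :
    Tendsto (fun t : ℝ => ((t:ℂ) - z)⁻¹) l (𝓝 0) := by
  rw [tendsto_zero_iff_norm_tendsto_zero]
  have h1 : Tendsto (fun t : ℝ => (|t| - ‖z‖)⁻¹) l (𝓝 0) :=
    tendsto_inv_atTop_zero.comp (tendsto_atTop_add_const_right _ (-‖z‖) hl)
  apply squeeze_zero' (Eventually.of_forall fun t => norm_nonneg _) _ h1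
  filter_upwards [hl.eventually (eventually_gt_atTop ‖z‖)] with t ht
  have h2 : |t| - ‖z‖ ≤ ‖(t:ℂ) - z‖ := by
    calc |t| - ‖z‖ = ‖(t:ℂ)‖ - ‖z‖ := by simp
    _ ≤ ‖(t:ℂ) - z‖ := norm_sub_norm_le _ _
  rw [norm_inv]
  exact inv_anti₀ (by linarith) h2

lemma aux_ratio_tendsto (w z : ℂ) (hz : z.im ≠ 0) {l : Filter ℝ}
    (hl : Tendsto (fun t : ℝ => |t|) l atTop) :
    Tendsto (fun t : ℝ => ((t:ℂ) - w) / ((t:ℂ) - z)) l (𝓝 1) := by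
  have h : ∀ t : ℝ, ((t:ℂ) - w) / ((t:ℂ) - z) = 1 + (z - w) * ((t:ℂ) - z)⁻¹ := by
    intro t
    field_simp [aux_ne hz t]
    ring
  have h2 : Tendsto (fun t : ℝ => 1 + (z - w) * ((t:ℂ) - z)⁻¹) l (𝓝 1) := by
    have := (tendsto_const_nhds (x := (z - w)) (f := l)).mul (aux_inv_tendsto z hl)
    simpa using tendsto_const_nhds.add this
  exact h2.congr fun t => (h t).symm

lemma aux_term_tendsto (c z : ℂ) (hz : z.im ≠ 0) (m : ℕ) {l : Filter ℝ}
    (hl : Tendsto (fun t : ℝ => |t|) l atTop) :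
    Tendsto (fun t : ℝ => (t:ℂ) * (c / ((t:ℂ) - z) ^ (m + 1))) l
      (𝓝 (if m = 0 then c else 0)) := by
  have h : ∀ t : ℝ, (t:ℂ) * (c / ((t:ℂ) - z) ^ (m + 1))
      = c * (((t:ℂ) - 0) / ((t:ℂ) - z)) * (((t:ℂ) - z)⁻¹) ^ m := by
    intro t
    rw [div_eq_mul_inv, div_eq_mul_inv, pow_succ', mul_inv, ← inv_pow]
    ring
  have hq := aux_ratio_tendsto 0 z hz hl
  rcases m with _ | m
  · simp only [if_pos rfl]
    have : Tendsto (fun t : ℝ => c * (((t:ℂ) - 0) / ((t:ℂ) - z)) * (((t:ℂ) - z)⁻¹) ^ 0) l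
        (𝓝 (c * 1 * 1)) := by
      simpa using tendsto_const_nhds.mul hq
    simpa using this.congr fun t => (h t).symm
  · simp only [Nat.succ_ne_zero, if_neg]
    have hp : Tendsto (fun t : ℝ => (((t:ℂ) - z)⁻¹) ^ (m + 1)) l (𝓝 0) := by
      simpa using (aux_inv_tendsto z hl).pow (m + 1)
    have : Tendsto (fun t : ℝ => c * (((t:ℂ) - 0) / ((t:ℂ) - z)) * (((t:ℂ) - z)⁻¹) ^ (m + 1)) l
        (𝓝 (c * 1 * 0)) := (tendsto_const_nhds.mul hq).mul hp
    simpa using this.congr fun t => (h t).symm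

lemma aux_id_deriv (t : ℝ) : HasDerivAt (fun t : ℝ => (t:ℂ)) 1 t := by
  simpa using (hasDerivAt_id t).ofReal_comp

lemma aux_pow_deriv (c z : ℂ) (hz : z.im ≠ 0) (m : ℕ) (t : ℝ) :
    HasDerivAt (fun t : ℝ => (-c / (m + 1)) * ((((t:ℂ) - z) ^ (m + 1))⁻¹))
      (c / ((t:ℂ) - z) ^ (m + 2)) t := by
  have h1 : HasDerivAt (fun w : ℂ => (w - z) ^ (m + 1))
      (((m + 1 : ℕ) : ℂ) * (((t:ℝ):ℂ) - z) ^ (m + 1 - 1) * 1) ((t:ℝ):ℂ) :=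
    ((hasDerivAt_id _).sub_const z).pow (m + 1)
  have h2 := ((h1.inv (pow_ne_zero _ (aux_ne hz t))).const_mul (-c / (m + 1))).comp_ofReal
  convert h2 using 1
  · funext y; rfl
  rw [Nat.add_sub_cancel]
  push_cast
  have hne := aux_ne hz t
  have hm : ((m:ℂ) + 1) ≠ 0 := by
    exact Nat.cast_add_one_ne_zero m
  field_simp
  ring

lemma aux_slit {z₁ z₂ : ℂ} (him : 0 < z₁.im * z₂.im) (t : ℝ) :
    ((t:ℂ) - z₁) / ((t:ℂ) - z₂) ∈ Complex.slitPlane := by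
  have h1 : z₁.im ≠ 0 := fun h => by simp [h] at him
  have h2 : z₂.im ≠ 0 := fun h => by simp [h] at him
  by_contra h
  rw [Complex.mem_slitPlane_iff] at h
  push_neg at h
  obtain ⟨hre, him⟩ := h
  set ρ := ((t:ℂ) - z₁) / ((t:ℂ) - z₂) with hρ
  have hρval : ρ = ((ρ.re : ℝ) : ℂ) := Complex.ext (by simp) (by simp [him])
  have hmul : ρ * ((t:ℂ) - z₂) = (t:ℂ) - z₁ := div_mul_cancel₀ _ (aux_ne h2 t)
  have him1 : (ρ * ((t:ℂ) - z₂)).im = -z₁.im := by rw [hmul]; simp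
  rw [hρval] at him1
  have him2 : z₁.im = ρ.re * z₂.im := by
    simp [Complex.mul_im] at him1
    linarith [him1]
  have : z₁.im * z₂.im = ρ.re * (z₂.im * z₂.im) := by rw [him2]; ring
  nlinarith [mul_self_nonneg z₂.im]

lemma aux_log_deriv {z₁ z₂ : ℂ} (him : 0 < z₁.im * z₂.im) (t : ℝ) :
    HasDerivAt (fun t : ℝ => Complex.log (((t:ℂ) - z₁) / ((t:ℂ) - z₂)))
      (1 / ((t:ℂ) - z₁) - 1 / ((t:ℂ) - z₂)) t := by
  have h1 : z₁.im ≠ 0 := fun h => by simp [h] at him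
  have h2 : z₂.im ≠ 0 := fun h => by simp [h] at him
  have hne1 := aux_ne h1 t
  have hne2 := aux_ne h2 t
  have hratio : HasDerivAt (fun w : ℂ => (w - z₁) / (w - z₂))
      ((1 * (((t:ℝ):ℂ) - z₂) - (((t:ℝ):ℂ) - z₁) * 1) / (((t:ℝ):ℂ) - z₂) ^ 2) ((t:ℝ):ℂ) :=
    ((hasDerivAt_id _).sub_const z₁).div ((hasDerivAt_id _).sub_const z₂) hne2
  have hlog := (Complex.hasDerivAt_log (aux_slit him t)).comp ((t:ℝ):ℂ) hratio
  have := hlog.comp_ofReal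
  convert this using 1
  · funext y; rfl
  have hρ : ((t:ℂ) - z₁) / ((t:ℂ) - z₂) ≠ 0 := div_ne_zero hne1 hne2
  field_simp

lemma partial_fractions (k n : ℕ) (hn : n < 2 * k) (z₁ z₂ : ℂ) (hz : z₁ ≠ z₂) :
    ∃ a b : ℕ → ℂ, ∀ t : ℂ, t - z₁ ≠ 0 → t - z₂ ≠ 0 →
      t ^ n / ((t - z₁) ^ k * (t - z₂) ^ k)
        = ∑ m ∈ Finset.range k, (a m / (t - z₁) ^ (m + 1) + b m / (t - z₂) ^ (m + 1)) := by
  have hk : 1 ≤ k := by omega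
  set p : ℂ[X] := (X - C z₁) ^ k with hp_def
  set q : ℂ[X] := (X - C z₂) ^ k with hq_def
  have hp : p.Monic := (monic_X_sub_C z₁).pow k
  have hq : q.Monic := (monic_X_sub_C z₂).pow k
  have hpdeg : p.natDegree = k := by
    simp [hp_def, natDegree_pow]
  have hqdeg : q.natDegree = k := by
    simp [hq_def, natDegree_pow]
  have hz' : IsUnit (z₁ - z₂) := (sub_ne_zero_of_ne hz).isUnit
  have hcop : IsCoprime p q := (isCoprime_X_sub_C_of_isUnit_sub hz').pow
  obtain ⟨u, v, huv⟩ := hcop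
  set r : ℂ[X] := (X ^ n * v) %ₘ p with hr_def
  set s : ℂ[X] := (X ^ n * v) /ₘ p with hs_def
  have hmod : r + p * s = X ^ n * v := modByMonic_add_div _ p
  set B : ℂ[X] := X ^ n * u + s * q with hB_def
  have hkey : (X : ℂ[X]) ^ n = B * p + r * q := by
    have h0 : X ^ n * u * p + (X ^ n * v) * q = (X:ℂ[X]) ^ n := by
      calc X ^ n * u * p + X ^ n * v * q = X ^ n * (u * p + v * q) := by ring
        _ = X ^ n := by rw [huv, mul_one]
    rw [← h0, ← hmod, hB_def]
    ring
  have hrdeg : r.natDegree < k := by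
    rcases eq_or_ne r 0 with h | h
    · simp [h]; omega
    · have := degree_modByMonic_lt (X ^ n * v) hp
      rw [← hr_def] at this
      have h2 : r.degree < (k : ℕ) := by
        rw [hp_def] at this
        simpa [degree_pow, degree_X_sub_C] using this
      exact (natDegree_lt_iff_degree_lt h).2 h2
  have hBdeg : B.natDegree < k := by
    rcases eq_or_ne B 0 with h | h
    · simp [h]; omega
    · have hBp : B * p = X ^ n - r * q := by rw [hkey]; ring
      have h1 : (B * p).natDegree = B.natDegree + k := by
        rw [natDegree_mul h hp.ne_zero, hpdeg]
      have h2 : (B * p).natDegree ≤ 2 * k - 1 := by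
        rw [hBp]
        refine le_trans (natDegree_sub_le _ _) ?_
        have h3 : (r * q).natDegree ≤ (k - 1) + k := by
          refine le_trans (natDegree_mul_le) ?_
          rw [hqdeg]
          omega
        simp only [natDegree_X_pow]
        omega
      omega
  refine ⟨fun m => (taylor z₁ r).coeff (k - 1 - m), fun m => (taylor z₂ B).coeff (k - 1 - m),
    fun t ht1 ht2 => ?_⟩
  have hpt : p.eval t = (t - z₁) ^ k := by simp [hp_def]
  have hqt : q.eval t = (t - z₂) ^ k := by simp [hq_def]
  have hkey_t : t ^ n = B.eval t * (t - z₁) ^ k + r.eval t * (t - z₂) ^ k := by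
    have := congrArg (eval t) hkey
    simpa [hpt, hqt] using this
  have expand : ∀ (w : ℂ) (f : ℂ[X]), f.natDegree < k → t - w ≠ 0 →
      f.eval t / (t - w) ^ k
        = ∑ m ∈ Finset.range k, (taylor w f).coeff (k - 1 - m) / (t - w) ^ (m + 1) := by
    intro w f hf hw
    have heval : f.eval t = ∑ j ∈ Finset.range k, (taylor w f).coeff j * (t - w) ^ j := by
      have h1 : f.eval t = (taylor w f).eval (t - w) := by rw [taylor_eval, sub_add_cancel]
      rw [h1, eval_eq_sum_range' (lt_of_le_of_lt (natDegree_taylor f w).le hf)]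
    rw [heval, Finset.sum_div]
    rw [← Finset.sum_range_reflect]
    apply Finset.sum_congr rfl
    intro j hj
    rw [Finset.mem_range] at hj
    rw [div_eq_div_iff (pow_ne_zero _ hw) (pow_ne_zero _ hw), mul_assoc, ← pow_add]
    congr 2
    omega
  rw [Finset.sum_add_distrib]
  rw [← expand z₁ r hrdeg ht1, ← expand z₂ B hBdeg ht2]
  rw [div_add_div _ _ (pow_ne_zero _ ht1) (pow_ne_zero _ ht2), div_eq_div_iff
    (mul_ne_zero (pow_ne_zero _ ht1) (pow_ne_zero _ ht2)) (mul_ne_zero (pow_ne_zero _ ht1) (pow_ne_zero _ ht2))]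
  rw [hkey_t]
  ring

lemma key_integral (k : ℕ) (hk : 2 ≤ k) (z₁ z₂ : ℂ) (him : 0 < z₁.im * z₂.im) (hz : z₁ ≠ z₂)
    (n : ℕ) (hn : n + 2 ≤ 2 * k) :
    ∫ t : ℝ, (t:ℂ) ^ n / (((t:ℂ) - z₁) ^ k * ((t:ℂ) - z₂) ^ k) = 0 := by
  have h1 : z₁.im ≠ 0 := fun h => by simp [h] at him
  have h2 : z₂.im ≠ 0 := fun h => by simp [h] at him
  set f₀ : ℝ → ℂ := fun t => (t:ℂ) ^ n / (((t:ℂ) - z₁) ^ k * ((t:ℂ) - z₂) ^ k) with hf₀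
  by_cases hint : Integrable f₀
  swap
  · exact integral_undef hint
  obtain ⟨A, B, hdec⟩ := partial_fractions k n (by omega) z₁ z₂ hz
  have hdecR : ∀ t : ℝ, f₀ t = ∑ m ∈ Finset.range k,
      (A m / ((t:ℂ) - z₁) ^ (m + 1) + B m / ((t:ℂ) - z₂) ^ (m + 1)) :=
    fun t => hdec t (aux_ne h1 t) (aux_ne h2 t)
  have hres : A 0 + B 0 = 0 := by
    have hl : Tendsto (fun t : ℝ => |t|) atTop atTop := tendsto_abs_atTop_atTop
    have hA : Tendsto (fun t : ℝ => (t:ℂ) * f₀ t) atTop (𝓝 0) := by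
      set j := 2 * k - n - 1 with hj
      set g : ℝ → ℂ := fun t => (((t:ℂ) ^ j)⁻¹)
        * (((t:ℂ)) / ((t:ℂ) - z₁)) ^ k * (((t:ℂ)) / ((t:ℂ) - z₂)) ^ k with hg
      have hgl : Tendsto g atTop (𝓝 0) := by
        have e1 : Tendsto (fun t : ℝ => ((t:ℂ))⁻¹ ^ j) atTop (𝓝 0) := by
          have := (aux_inv_tendsto 0 hl).pow j
          simp only [sub_zero] at this
          simpa [zero_pow (show j ≠ 0 by omega)] using this
        have e2 := (aux_ratio_tendsto 0 z₁ h1 hl).pow k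
        have e3 := (aux_ratio_tendsto 0 z₂ h2 hl).pow k
        have := (e1.mul e2).mul e3
        simpa using this
      apply hgl.congr'
      filter_upwards [eventually_ge_atTop (1:ℝ)] with t ht
      have ht0 : (t:ℂ) ≠ 0 := by
        simp only [ne_eq, Complex.ofReal_eq_zero]
        linarith
      have hne1 := aux_ne h1 t
      have hne2 := aux_ne h2 t
      rw [hg, hf₀]
      simp only [div_pow]
      field_simp
      have e2 : (t:ℂ) ^ (k + k) = (t:ℂ) * (t:ℂ) ^ n * (t:ℂ) ^ j := by
        rw [← pow_succ', ← pow_add]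
        congr 1
        omega
      linear_combination e2
    have hB : Tendsto (fun t : ℝ => (t:ℂ) * f₀ t) atTop (𝓝 (A 0 + B 0)) := by
      have hfun : ∀ t : ℝ, (t:ℂ) * f₀ t = ∑ m ∈ Finset.range k,
          ((t:ℂ) * (A m / ((t:ℂ) - z₁) ^ (m + 1)) + (t:ℂ) * (B m / ((t:ℂ) - z₂) ^ (m + 1))) := by
        intro t
        rw [hdecR t, Finset.mul_sum]
        exact Finset.sum_congr rfl fun m _ => mul_add _ _ _
      have hsum : Tendsto (fun t : ℝ => ∑ m ∈ Finset.range k,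
          ((t:ℂ) * (A m / ((t:ℂ) - z₁) ^ (m + 1)) + (t:ℂ) * (B m / ((t:ℂ) - z₂) ^ (m + 1))))
          atTop (𝓝 (∑ m ∈ Finset.range k,
            ((if m = 0 then A m else 0) + (if m = 0 then B m else 0)))) :=
        tendsto_finset_sum _ fun m _ =>
          (aux_term_tendsto (A m) z₁ h1 m hl).add (aux_term_tendsto (B m) z₂ h2 m hl)
      have hval : (∑ m ∈ Finset.range k,
          ((if m = 0 then A m else 0) + (if m = 0 then B m else 0))) = A 0 + B 0 := by
        rw [Finset.sum_eq_single_of_mem 0 (Finset.mem_range.2 (by omega))]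
        · simp
        · intro b _ hb
          simp [hb]
      rw [hval] at hsum
      exact hsum.congr fun t => (hfun t).symm
    exact tendsto_nhds_unique hB hA
  have hB0 : B 0 = -A 0 := by linear_combination hres
  obtain ⟨K, rfl⟩ : ∃ K, k = K + 1 := ⟨k - 1, by omega⟩
  set F : ℝ → ℂ := fun t => A 0 * Complex.log (((t:ℂ) - z₁) / ((t:ℂ) - z₂)) +
    ∑ m ∈ Finset.range K, ((-A (m+1) / ((m:ℂ) + 1)) * ((((t:ℂ) - z₁) ^ (m+1))⁻¹)
      + (-B (m+1) / ((m:ℂ) + 1)) * ((((t:ℂ) - z₂) ^ (m+1))⁻¹)) with hF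
  have hderiv : ∀ t : ℝ, HasDerivAt F (f₀ t) t := by
    intro t
    have hlog := (aux_log_deriv him t).const_mul (A 0)
    have hsum : HasDerivAt (fun t : ℝ => ∑ m ∈ Finset.range K,
        ((-A (m+1) / ((m:ℂ) + 1)) * ((((t:ℂ) - z₁) ^ (m+1))⁻¹)
          + (-B (m+1) / ((m:ℂ) + 1)) * ((((t:ℂ) - z₂) ^ (m+1))⁻¹)))
        (∑ m ∈ Finset.range K,
          (A (m+1) / ((t:ℂ) - z₁) ^ (m+2) + B (m+1) / ((t:ℂ) - z₂) ^ (m+2))) t :=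
      HasDerivAt.fun_sum fun m _ =>
        (aux_pow_deriv (A (m+1)) z₁ h1 m t).add (aux_pow_deriv (B (m+1)) z₂ h2 m t)
    have htot := hlog.add hsum
    have heq : f₀ t = A 0 * (1 / ((t:ℂ) - z₁) - 1 / ((t:ℂ) - z₂)) +
        ∑ m ∈ Finset.range K,
          (A (m+1) / ((t:ℂ) - z₁) ^ (m+2) + B (m+1) / ((t:ℂ) - z₂) ^ (m+2)) := by
      rw [hdecR t, Finset.sum_range_succ', hB0]
      have hstep : ∀ x ∈ Finset.range K,
          A (x+1) / ((t:ℂ) - z₁) ^ (x+1+1) + B (x+1) / ((t:ℂ) - z₂) ^ (x+1+1)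
            = A (x+1) / ((t:ℂ) - z₁) ^ (x+2) + B (x+1) / ((t:ℂ) - z₂) ^ (x+2) :=
        fun x _ => rfl
      rw [Finset.sum_congr rfl hstep]
      ring
    rw [heq]
    exact htot
  have hlim : ∀ l : Filter ℝ, Tendsto (fun t : ℝ => |t|) l atTop → Tendsto F l (𝓝 0) := by
    intro l hl
    have hlog : Tendsto (fun t : ℝ => A 0 * Complex.log (((t:ℂ) - z₁) / ((t:ℂ) - z₂))) l
        (𝓝 (A 0 * Complex.log 1)) := by
      exact tendsto_const_nhds.mul (((continuousAt_clog one_mem_slitPlane).tendsto).comp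
        (aux_ratio_tendsto z₁ z₂ h2 hl))
    rw [Complex.log_one, mul_zero] at hlog
    have hsum : Tendsto (fun t : ℝ => ∑ m ∈ Finset.range K,
        ((-A (m+1) / ((m:ℂ) + 1)) * ((((t:ℂ) - z₁) ^ (m+1))⁻¹)
          + (-B (m+1) / ((m:ℂ) + 1)) * ((((t:ℂ) - z₂) ^ (m+1))⁻¹))) l (𝓝 0) := by
      have : Tendsto (fun t : ℝ => ∑ m ∈ Finset.range K,
          ((-A (m+1) / ((m:ℂ) + 1)) * ((((t:ℂ) - z₁) ^ (m+1))⁻¹)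
            + (-B (m+1) / ((m:ℂ) + 1)) * ((((t:ℂ) - z₂) ^ (m+1))⁻¹))) l
          (𝓝 (∑ m ∈ Finset.range K, ((-A (m+1) / ((m:ℂ) + 1)) * 0
            + (-B (m+1) / ((m:ℂ) + 1)) * 0))) := by
        refine tendsto_finset_sum _ fun m _ => Tendsto.add ?_ ?_
        · refine tendsto_const_nhds.mul ?_
          have := (aux_inv_tendsto z₁ hl).pow (m+1)
          simpa [inv_pow, zero_pow] using this
        · refine tendsto_const_nhds.mul ?_
          have := (aux_inv_tendsto z₂ hl).pow (m+1)
          simpa [inv_pow, zero_pow] using this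
      simpa using this
    simpa using hlog.add hsum
  have := integral_of_hasDerivAt_of_tendsto hderiv hint
    (hlim atBot tendsto_abs_atBot_atTop) (hlim atTop tendsto_abs_atTop_atTop)
  simpa using this


/-- if `b² - 4Nac = D > 0` is not a perfect square and `ac > 0`, then
for `2 ≤ k` and `0 ≤ n ≤ 2k-2`, `∫_{-∞}^{∞} tⁿ/(-Nat² + ibt + c)^k dt = 0`. -/
theorem integral_eq_zero_of_same_side
    (k : ℕ) (hk : 2 ≤ k) (N : ℤ) (hN : 1 ≤ N) (a b c D : ℤ)
    (hD : b ^ 2 - 4 * N * a * c = D) (hDpos : 0 < D)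
    (hDns : ¬ ∃ m : ℤ, m ^ 2 = D) (hac : 0 < a * c)
    (n : ℕ) (hn : n ≤ 2 * k - 2) :
    ∫ t : ℝ, (t : ℂ) ^ n /
        (-(N : ℂ) * a * (t : ℂ) ^ 2 + (b : ℂ) * Complex.I * t + (c : ℂ)) ^ k = 0 := by
  have ha : (a:ℝ) ≠ 0 := by
    have h : a ≠ 0 := by rintro rfl; simp at hac
    exact_mod_cast h
  have hNr : (0:ℝ) < (N:ℝ) := by exact_mod_cast hN
  have hNa : (N:ℝ) * a ≠ 0 := mul_ne_zero (ne_of_gt hNr) ha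
  have hNa2 : 2 * ((N:ℝ) * a) ≠ 0 := by simpa using hNa
  have hDr : ((b:ℝ))^2 - 4 * N * a * c = D := by exact_mod_cast hD
  have hDrpos : (0:ℝ) < (D:ℝ) := by exact_mod_cast hDpos
  have hacr : (0:ℝ) < (a:ℝ) * c := by exact_mod_cast hac
  set s : ℝ := Real.sqrt D with hs
  have hs2 : s ^ 2 = (D:ℝ) := Real.sq_sqrt hDrpos.le
  have hspos : 0 < s := Real.sqrt_pos.2 hDrpos
  set x₁ : ℝ := ((b:ℝ) + s) / (2 * ((N:ℝ) * a)) with hx₁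
  set x₂ : ℝ := ((b:ℝ) - s) / (2 * ((N:ℝ) * a)) with hx₂
  set z₁ : ℂ := Complex.I * (x₁ : ℝ) with hz₁
  set z₂ : ℂ := Complex.I * (x₂ : ℝ) with hz₂
  have him1 : z₁.im = x₁ := by simp [hz₁]
  have him2 : z₂.im = x₂ := by simp [hz₂]
  have he : ((b:ℝ) + s) * ((b:ℝ) - s) = 4 * N * a * c := by
    linear_combination hDr - hs2
  have hx12 : x₁ * x₂ = (a * c : ℝ) / ((N:ℝ) * a^2) := by
    rw [hx₁, hx₂, div_mul_div_comm, he]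
    rw [div_eq_div_iff (by positivity) (by positivity)]
    ring
  have him : 0 < z₁.im * z₂.im := by
    rw [him1, him2, hx12]
    positivity
  have hzz : z₁ ≠ z₂ := by
    intro h
    rw [hz₁, hz₂] at h
    have h2 : (x₁ : ℂ) = (x₂ : ℂ) := mul_left_cancel₀ Complex.I_ne_zero h
    have h3 : x₁ = x₂ := by exact_mod_cast h2
    rw [hx₁, hx₂, div_eq_div_iff hNa2 hNa2] at h3
    have h4 := mul_right_cancel₀ hNa2 h3
    linarith
  have hsum : (N:ℝ) * a * (x₁ + x₂) = b := by
    rw [hx₁, hx₂]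
    field_simp
    ring
  have hprod : (N:ℝ) * a * (x₁ * x₂) = c := by
    rw [hx12]
    field_simp
  have hsumc : (N:ℂ) * a * ((x₁:ℂ) + (x₂:ℂ)) = (b:ℂ) := by exact_mod_cast congrArg Complex.ofReal hsum
  have hprodc : (N:ℂ) * a * ((x₁:ℂ) * (x₂:ℂ)) = (c:ℂ) := by exact_mod_cast congrArg Complex.ofReal hprod
  have hfact : ∀ t : ℂ, -(N:ℂ) * a * t ^ 2 + (b:ℂ) * Complex.I * t + (c:ℂ)
      = (-(N:ℂ) * a) * ((t - z₁) * (t - z₂)) := by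
    intro t
    rw [hz₁, hz₂]
    linear_combination (-Complex.I * t) * hsumc
      + ((N:ℂ) * a * (x₁:ℂ) * (x₂:ℂ)) * Complex.I_sq - hprodc
  have hrw : ∀ t : ℝ, (t : ℂ) ^ n /
      (-(N : ℂ) * a * (t : ℂ) ^ 2 + (b : ℂ) * Complex.I * t + (c : ℂ)) ^ k
      = ((-(N:ℂ) * a) ^ k)⁻¹ * ((t:ℂ) ^ n / (((t:ℂ) - z₁) ^ k * ((t:ℂ) - z₂) ^ k)) := by
    have habs : ∀ (u E X Y : ℂ), u / (E * (X * Y)) ^ k = (E ^ k)⁻¹ * (u / (X ^ k * Y ^ k)) := by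
      intro u E X Y
      rw [mul_pow, mul_pow, div_eq_mul_inv, mul_inv, div_eq_mul_inv]
      ring
    intro t
    rw [hfact (t:ℂ)]
    exact habs _ _ _ _
  calc ∫ t : ℝ, (t : ℂ) ^ n /
        (-(N : ℂ) * a * (t : ℂ) ^ 2 + (b : ℂ) * Complex.I * t + (c : ℂ)) ^ k
      = ∫ t : ℝ, ((-(N:ℂ) * a) ^ k)⁻¹ * ((t:ℂ) ^ n / (((t:ℂ) - z₁) ^ k * ((t:ℂ) - z₂) ^ k)) := by
        congr 1
        funext t
        exact hrw t
    _ = ((-(N:ℂ) * a) ^ k)⁻¹ * ∫ t : ℝ, (t:ℂ) ^ n / (((t:ℂ) - z₁) ^ k * ((t:ℂ) - z₂) ^ k) :=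
        integral_const_mul _ _
    _ = 0 := by
        rw [key_integral k hk z₁ z₂ him hzz n (by omega), mul_zero]
end

section
/- Let D ≡ 1 (mod 4) be positive, K = ℚ(√D), O_K = ℤ[(1+√D)/2], and let Q = [A,B,C] be a primitive integral binary quadratic form with B² - 4AC = D. Suppose d is a positive integer dividing A with gcd(B, d) = 1. Set ω_B = (-B+√D)/2. Then the ideal (A, ω_B) of O_K factors as (A, ω_B) = (A/d, ω_B)·(d, ω_B). -/
open NumberField

/-- with `K = ℚ(√D)`, `D ≡ 1 (mod 4)` positive, `Q = [A,B,C]`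
primitive with `B² - 4AC = D`, `d ∣ A` with `gcd(B,d) = 1`, and
`ω_B = (-B+√D)/2 ∈ O_K`, the ideal `(A, ω_B)` of `O_K` factors as
`(A, ω_B) = (A/d, ω_B)·(d, ω_B)`. -/
theorem ideal_factorization
    (D : ℤ) (hDpos : 0 < D) (hD1 : D % 4 = 1)
    (K : Type*) [Field K] [NumberField K] (hdeg : Module.finrank ℚ K = 2)
    (sqrtD : K) (hsq : sqrtD ^ 2 = (D : K))
    (A B C : ℤ) (hprim : Int.gcd A (Int.gcd B C) = 1)
    (hdisc : B ^ 2 - 4 * A * C = D)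
    (d A' : ℤ) (hd : 0 < d) (hdA : A = d * A') (hBd : Int.gcd B d = 1)
    (ω : 𝓞 K) (hω : (ω : K) = (-(B : K) + sqrtD) / 2) :
    Ideal.span {(A : 𝓞 K), ω} =
      Ideal.span {(A' : 𝓞 K), ω} * Ideal.span {(d : 𝓞 K), ω} := by
  have hA : (A : 𝓞 K) = (d : 𝓞 K) * (A' : 𝓞 K) := by exact_mod_cast hdA
  -- the key algebraic relation ω² = -Bω - AC
  have hrel : ω ^ 2 = -(B : 𝓞 K) * ω - (A : 𝓞 K) * (C : 𝓞 K) := by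
    have hDK : (B : K) ^ 2 - 4 * A * C = D := by exact_mod_cast hdisc
    apply RingOfIntegers.ext
    push_cast
    rw [show (Algebra.cast ω : K) = (-(B : K) + sqrtD) / 2 from hω]
    field_simp
    have hc : ∀ n : ℤ, ((n : 𝓞 K) : K) = (n : K) := fun n => map_intCast (algebraMap (𝓞 K) K) n
    simp only [hc]
    linear_combination hsq - hDK
  -- Bezout relation from gcd(B, d) = 1
  obtain ⟨u, v, huv⟩ := Int.isCoprime_iff_gcd_eq_one.mpr hBd
  have huv' : (u : 𝓞 K) * B + (v : 𝓞 K) * d = 1 := by exact_mod_cast huv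
  set I := Ideal.span {(A' : 𝓞 K), ω} with hI
  set J := Ideal.span {(d : 𝓞 K), ω} with hJ
  have hA'I : (A' : 𝓞 K) ∈ I := Ideal.subset_span (Set.mem_insert _ _)
  have hωI : ω ∈ I := Ideal.subset_span (Set.mem_insert_of_mem _ rfl)
  have hdJ : (d : 𝓞 K) ∈ J := Ideal.subset_span (Set.mem_insert _ _)
  have hωJ : ω ∈ J := Ideal.subset_span (Set.mem_insert_of_mem _ rfl)
  apply le_antisymm
  · rw [Ideal.span_le]
    rintro x (rfl | hx)
    · -- A = A' * d ∈ I * J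
      have h : (A : 𝓞 K) = (A' : 𝓞 K) * (d : 𝓞 K) := by rw [hA]; ring
      rw [h]
      exact Ideal.mul_mem_mul hA'I hdJ
    · -- ω ∈ I * J, using the Bezout relation
      rw [hx]
      have h1 : ω * ω ∈ I * J := Ideal.mul_mem_mul hωI hωJ
      have h2 : (A' : 𝓞 K) * (d : 𝓞 K) ∈ I * J := Ideal.mul_mem_mul hA'I hdJ
      have h3 : ω * (d : 𝓞 K) ∈ I * J := Ideal.mul_mem_mul hωI hdJ
      have key : ω = (-(u : 𝓞 K)) * (ω * ω) +
          (-(u : 𝓞 K) * C) * ((A' : 𝓞 K) * (d : 𝓞 K)) + (v : 𝓞 K) * (ω * (d : 𝓞 K)) := by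
        linear_combination (u : 𝓞 K) * hrel - ω * huv' + (-(u : 𝓞 K) * C) * hA
      rw [key]
      exact add_mem (add_mem (Ideal.mul_mem_left _ _ h1) (Ideal.mul_mem_left _ _ h2))
        (Ideal.mul_mem_left _ _ h3)
  · rw [Ideal.mul_le]
    intro r hr s hs
    rw [hI, Ideal.mem_span_pair] at hr
    rw [hJ, Ideal.mem_span_pair] at hs
    obtain ⟨a, b, rfl⟩ := hr
    obtain ⟨c, e, rfl⟩ := hs
    rw [Ideal.mem_span_pair]
    refine ⟨a * c - b * e * C, a * e * A' + b * c * d - b * e * B, ?_⟩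
    linear_combination (-(b * e) : 𝓞 K) * hrel + (a * c : 𝓞 K) * hA
end

section
/- Let N, d be positive integers with d | N, let D be a positive non-square congruent to a square mod 4N, and let Q = [Na, b, c] ∈ Q_{N,D,1} with gcd(Na, b, c) = 1. Put Q^{(d)} = [(N/d)a, b, cd]. Then every element of the stabilizer of Q^{(d)} in Γ₀(N/d) lies in Γ₀⁰(N/d, d) := {[[α,β],[γ,δ]] ∈ Γ₀(N/d) : β ≡ 0 (mod d)}; i.e., Γ₀(N/d)_{Q^{(d)}} = Γ₀⁰(N/d, d)_{Q^{(d)}}. -/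
/-!
A matrix stabilizing `[A, B, C]` satisfies `Aβ = -Cγ`, and feeding this back into the
equations for the coefficients of `y²` and `xy` gives `B·βδ ≡ 0` and `B·βγ ≡ 0` modulo `C`.
For `Q^{(d)}` we have `d ∣ C = cd`, while `b ≡ 1 (mod 2N)` makes `b` a unit modulo `d`;
hence `d ∣ βδ` and `d ∣ βγ`, and `β = α·βδ - β·βγ` because the determinant is `1`.
-/

section StabilizerEquations

variable {R : Type*} [CommRing R] {A B C α β γ δ : R}

theorem stabilizer_coeff_eqs [NoZeroDivisors R] [CharZero R] (hdet : α * δ - β * γ = 1)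
    (hstab : ∀ x y : R,
      A * (α * x + β * y) ^ 2 + B * (α * x + β * y) * (γ * x + δ * y) + C * (γ * x + δ * y) ^ 2
        = A * x ^ 2 + B * x * y + C * y ^ 2) :
    A * α ^ 2 + B * α * γ + C * γ ^ 2 = A ∧
      A * β ^ 2 + B * β * δ + C * δ ^ 2 = C ∧
      A * α * β + B * β * γ + C * γ * δ = 0 := by
  have h₁ : A * α ^ 2 + B * α * γ + C * γ ^ 2 = A := by linear_combination hstab 1 0
  have h₂ : A * β ^ 2 + B * β * δ + C * δ ^ 2 = C := by linear_combination hstab 0 1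
  have h₃ : 2 * (A * α * β + B * β * γ + C * γ * δ) = 0 := by
    linear_combination hstab 1 1 - h₁ - h₂ - B * hdet
  exact ⟨h₁, h₂, (mul_eq_zero.mp h₃).resolve_left two_ne_zero⟩

theorem mul_upperRight_eq_neg_mul_lowerLeft (hdet : α * δ - β * γ = 1)
    (h₂ : A * β ^ 2 + B * β * δ + C * δ ^ 2 = C) (h₃ : A * α * β + B * β * γ + C * γ * δ = 0) :
    A * β = -(C * γ) := by
  linear_combination δ * h₃ - γ * h₂ - A * β * hdet

theorem dvd_upperRight_of_dvd_of_isCoprime {d : R} (hdet : α * δ - β * γ = 1)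
    (h₂ : A * β ^ 2 + B * β * δ + C * δ ^ 2 = C) (h₃ : A * α * β + B * β * γ + C * γ * δ = 0)
    (hC : d ∣ C) (hB : IsCoprime d B) : d ∣ β := by
  have key := mul_upperRight_eq_neg_mul_lowerLeft hdet h₂ h₃
  have hβδ : d ∣ B * (β * δ) :=
    (hC.mul_right (1 - δ ^ 2 + β * γ)).trans ⟨1, by linear_combination h₂ - β * key⟩
  have hβγ : d ∣ B * (β * γ) :=
    (hC.mul_right (γ * (α - δ))).trans ⟨1, by linear_combination h₃ - α * key⟩
  have hβ : β = α * (β * δ) - β * (β * γ) := by linear_combination -β * hdet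
  rw [hβ]
  exact dvd_sub ((hB.dvd_of_dvd_mul_left hβδ).mul_left α) ((hB.dvd_of_dvd_mul_left hβγ).mul_left β)

end StabilizerEquations

theorem Int.isCoprime_of_modEq_one {d b : ℤ} (h : b ≡ 1 [ZMOD d]) : IsCoprime d b := by
  obtain ⟨k, hk⟩ := h.dvd
  exact ⟨k, 1, by linear_combination -hk⟩

theorem stabilizer_in_gamma00_general
    (N d N' : ℤ) (hdN : N = d * N')
    (a b c : ℤ)
    (hb : b ≡ 1 [ZMOD 2 * N])
    (α β γ δ : ℤ) (hdet : α * δ - β * γ = 1)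
    (hstab : ∀ x y : ℤ,
      (N' * a) * (α * x + β * y) ^ 2 + b * (α * x + β * y) * (γ * x + δ * y)
          + (c * d) * (γ * x + δ * y) ^ 2
        = (N' * a) * x ^ 2 + b * x * y + (c * d) * y ^ 2) :
    d ∣ β := by
  obtain ⟨-, h₂, h₃⟩ := stabilizer_coeff_eqs hdet hstab
  have hbd : b ≡ 1 [ZMOD d] := hb.of_dvd ⟨2 * N', by rw [hdN]; ring⟩
  exact dvd_upperRight_of_dvd_of_isCoprime hdet h₂ h₃ (dvd_mul_left d c)
    (Int.isCoprime_of_modEq_one hbd)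

/-- let `d ∣ N`, `D` a positive non-square, `Q = [Na,b,c]` a
`Γ₀(N)`-primitive form with `b² - 4Nac = D` and `b ≡ 1 (mod 2N)`, and put
`Q^{(d)} = [(N/d)a, b, cd]`. Then every element of `Γ₀(N/d)` stabilizing
`Q^{(d)}` has upper-right entry divisible by `d`, i.e.
`Γ₀(N/d)_{Q^{(d)}} = Γ₀⁰(N/d,d)_{Q^{(d)}}`. -/
theorem stabilizer_in_gamma00
    (N d N' : ℤ) (hN : 0 < N) (hd : 0 < d) (hdN : N = d * N')
    (a b c D : ℤ) (hdisc : b ^ 2 - 4 * N * a * c = D) (hDpos : 0 < D)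
    (hDns : ¬ ∃ m : ℤ, m ^ 2 = D)
    (hb : b ≡ 1 [ZMOD 2 * N])
    (hprim : Int.gcd (N * a) (Int.gcd b c) = 1)
    (α β γ δ : ℤ) (hdet : α * δ - β * γ = 1) (hγ : N' ∣ γ)
    (hstab : ∀ x y : ℤ,
      (N' * a) * (α * x + β * y) ^ 2 + b * (α * x + β * y) * (γ * x + δ * y)
          + (c * d) * (γ * x + δ * y) ^ 2
        = (N' * a) * x ^ 2 + b * x * y + (c * d) * y ^ 2) :
    d ∣ β :=
  stabilizer_in_gamma00_general N d N' hdN a b c hb α β γ δ hdet hstab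
end

section
/- Let k ≥ 2, let N be a positive integer, let D > 0 be a non-square congruent to 1 mod 4N, and let d | N. Then the map [Na/d, b, c] ↦ (b, a) is a bijection from {(a,b,c) ∈ ℤ³ : b² - (4N/d)ac = D, b ≡ 1 (mod 2N/d), a > 0 > c} onto {(b,a) ∈ ℤ × ℤ_{>0} : |b| < √D, b ≡ 1 (mod 2N/d), a | d(D - b²)/(4N)}. Consequently Σ over the first set of a^{k-1} equals Σ_{|b|<√D, b ≡ 1 (mod 2N/d)} σ_{k-1}(d(D - b²)/(4N)). -/
/-- for `d ∣ N` (written `N = d·N'`), `D ≡ 1 (mod 4N)` positive and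
non-square, the map `[(N/d)a, b, c] ↦ (b, a)` is a bijection from
`{(a,b,c) : b² - 4N'ac = D, b ≡ 1 (mod 2N'), a > 0 > c}` onto
`{(b,a) : b² < D, b ≡ 1 (mod 2N'), a > 0, a ∣ d(D-b²)/(4N)}` (the divisibility
encoded as `4N'a ∣ D - b²`), and consequently
`Σ a^{k-1}` over the first set equals
`Σ_{|b|<√D, b ≡ 1 (2N')} σ_{k-1}(d(D-b²)/(4N))`. -/
theorem form_divisor_bijection
    (k : ℕ) (hk : 2 ≤ k) (N d N' : ℤ) (hN : 0 < N) (hd : 0 < d) (hdN : N = d * N')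
    (D : ℤ) (hDpos : 0 < D) (hDns : ¬ ∃ m : ℤ, m ^ 2 = D)
    (hD1 : D ≡ 1 [ZMOD 4 * N])
    (S : Set (ℤ × ℤ × ℤ))
    (hS : S = {p | p.2.1 ^ 2 - 4 * N' * p.1 * p.2.2 = D ∧
      p.2.1 ≡ 1 [ZMOD 2 * N'] ∧ 0 < p.1 ∧ p.2.2 < 0})
    (T : Set (ℤ × ℤ))
    (hT : T = {q | q.1 ^ 2 < D ∧ q.1 ≡ 1 [ZMOD 2 * N'] ∧ 0 < q.2 ∧
      (4 * N' * q.2) ∣ (D - q.1 ^ 2)})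
    (hSfin : S.Finite)
    (B : Set ℤ) (hB : B = {b | b ^ 2 < D ∧ b ≡ 1 [ZMOD 2 * N']}) (hBfin : B.Finite) :
    Set.BijOn (fun p : ℤ × ℤ × ℤ => (p.2.1, p.1)) S T ∧
    (∑ p ∈ hSfin.toFinset, p.1 ^ (k - 1))
      = ∑ b ∈ hBfin.toFinset,
          ∑ e ∈ ((D - b ^ 2) / (4 * N')).toNat.divisors, ((e : ℕ) : ℤ) ^ (k - 1) := by
  subst hdN
  have hN' : 0 < N' := by nlinarith
  have hN4 : (0:ℤ) < 4 * N' := by linarith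
  -- key divisibility from congruences
  have hdvd : ∀ b : ℤ, b ≡ 1 [ZMOD 2 * N'] → (4 * N') ∣ D - b ^ 2 := by
    intro b hb
    obtain ⟨t, ht⟩ := (hb.symm).dvd
    obtain ⟨s, hs⟩ := (hD1.symm).dvd
    exact ⟨d * s - t - N' * t ^ 2, by linear_combination hs - (b + 1) * ht - 2 * N' * t * ht⟩
  -- membership in S, unpacked
  have hSmem : ∀ p : ℤ × ℤ × ℤ, p ∈ S ↔ (p.2.1 ^ 2 - 4 * N' * p.1 * p.2.2 = D ∧
      p.2.1 ≡ 1 [ZMOD 2 * N'] ∧ 0 < p.1 ∧ p.2.2 < 0) := by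
    intro p; rw [hS]; rfl
  have hBmem : ∀ b : ℤ, b ∈ B ↔ (b ^ 2 < D ∧ b ≡ 1 [ZMOD 2 * N']) := by
    intro b; rw [hB]; rfl
  constructor
  · constructor
    · rintro ⟨a, b, c⟩ hp
      obtain ⟨heq, hcong, ha, hc⟩ := (hSmem _).1 hp
      simp only at heq hcong ha hc
      rw [hT]
      refine ⟨?_, hcong, ha, ⟨-c, by linear_combination -heq⟩⟩
      simp only
      nlinarith [mul_pos (mul_pos hN4 ha) (neg_pos.mpr hc)]
    constructor
    · rintro ⟨a, b, c⟩ hp ⟨a', b', c'⟩ hq hfe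
      obtain ⟨heq, -, ha, -⟩ := (hSmem _).1 hp
      obtain ⟨heq', -, -, -⟩ := (hSmem _).1 hq
      simp only [Prod.mk.injEq] at hfe heq heq' ha ⊢
      obtain ⟨hb, haa⟩ := hfe
      subst hb; subst haa
      refine ⟨rfl, rfl, ?_⟩
      have h4 : (4 * N' * a : ℤ) ≠ 0 := by positivity
      have : 4 * N' * a * c = 4 * N' * a * c' := by linarith
      exact mul_left_cancel₀ h4 this
    · rintro ⟨b, a⟩ hq
      rw [hT] at hq
      obtain ⟨hbD, hcong, ha, hdva⟩ := hq
      simp only at hbD hcong ha hdva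
      obtain ⟨c', hc'⟩ := hdva
      have hc'pos : 0 < c' := by nlinarith [mul_pos hN4 ha]
      refine ⟨(a, b, -c'), (hSmem _).2 ⟨?_, hcong, ha, by simp only; linarith⟩, rfl⟩
      simp only
      linear_combination -hc'
  · -- the sum identity
    have key : ∀ p : ℤ × ℤ × ℤ, p ∈ S →
        (D - p.2.1 ^ 2) / (4 * N') = p.1 * (-p.2.2) := by
      rintro ⟨a, b, c⟩ hp
      obtain ⟨heq, -, -, -⟩ := (hSmem _).1 hp
      simp only at heq ⊢
      have : D - b ^ 2 = (4 * N') * (a * -c) := by linear_combination -heq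
      rw [this, Int.mul_ediv_cancel_left _ (by positivity)]
    refine Eq.trans (α := ℤ) ?_ (Finset.sum_sigma hBfin.toFinset
      (fun b => ((D - b ^ 2) / (4 * N')).toNat.divisors)
      (fun x => ((x.2 : ℕ) : ℤ) ^ (k - 1)))
    refine Finset.sum_nbij'
      (fun p : ℤ × ℤ × ℤ => (⟨p.2.1, p.1.toNat⟩ : Σ _ : ℤ, ℕ))
      (fun x : Σ _ : ℤ, ℕ => ((x.2 : ℤ), x.1, -((D - x.1 ^ 2) / (4 * N') / (x.2 : ℤ))))
      ?_ ?_ ?_ ?_ ?_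
    · rintro ⟨a, b, c⟩ hp
      rw [Set.Finite.mem_toFinset] at hp
      obtain ⟨heq, hcong, ha, hc⟩ := (hSmem _).1 hp
      simp only at heq hcong ha hc
      have hM := key _ hp
      simp only at hM
      show (⟨b, a.toNat⟩ : Σ _ : ℤ, ℕ) ∈ hBfin.toFinset.sigma _
      simp only [Finset.mem_sigma, Set.Finite.mem_toFinset, hBmem, Set.mem_setOf_eq]
      refine ⟨⟨by nlinarith [mul_pos (mul_pos hN4 ha) (neg_pos.mpr hc)], hcong⟩, ?_⟩
      rw [Nat.mem_divisors]
      have hMpos : 0 < (D - b ^ 2) / (4 * N') := by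
        rw [hM]; exact mul_pos ha (by linarith)
      constructor
      · rw [← Int.natCast_dvd_natCast, Int.toNat_of_nonneg ha.le,
          Int.toNat_of_nonneg hMpos.le]
        exact ⟨-c, hM⟩
      · omega
    · rintro ⟨b, e⟩ hx
      rw [Finset.mem_sigma, Set.Finite.mem_toFinset, hBmem, Nat.mem_divisors] at hx
      obtain ⟨⟨hbD, hcong⟩, hedvd, hMne⟩ := hx
      simp only at hbD hcong hedvd
      set M : ℤ := (D - b ^ 2) / (4 * N') with hMdef
      have hMD : (4 * N') * M = D - b ^ 2 := Int.mul_ediv_cancel' (hdvd b hcong)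
      have hMpos : 0 < M := by nlinarith
      have hepos : 0 < e := Nat.pos_of_ne_zero (fun h => by simp [h] at hedvd; omega)
      have he' : (0:ℤ) < (e : ℤ) := by exact_mod_cast hepos
      have heM : (e : ℤ) ∣ M := by
        rw [← Int.toNat_of_nonneg hMpos.le, Int.natCast_dvd_natCast]; exact hedvd
      have hqe : (e : ℤ) * (M / (e : ℤ)) = M := Int.mul_ediv_cancel' heM
      have hqpos : 0 < M / (e : ℤ) := by nlinarith
      show ((e : ℤ), b, -(M / (e : ℤ))) ∈ hSfin.toFinset
      rw [Set.Finite.mem_toFinset]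
      refine (hSmem _).2 ⟨?_, hcong, he', by simp only; linarith⟩
      simp only
      linear_combination 4 * N' * hqe + hMD
    · rintro ⟨a, b, c⟩ hp
      rw [Set.Finite.mem_toFinset] at hp
      obtain ⟨heq, hcong, ha, hc⟩ := (hSmem _).1 hp
      simp only at heq ha hc
      have hM := key _ hp
      simp only at hM
      show (((a.toNat : ℤ), b, -((D - b ^ 2) / (4 * N') / (a.toNat : ℤ))) : ℤ × ℤ × ℤ)
        = (a, b, c)
      rw [Int.toNat_of_nonneg ha.le, hM, Int.mul_ediv_cancel_left _ ha.ne', neg_neg]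
    · rintro ⟨b, e⟩ hx
      show (⟨b, ((e : ℤ)).toNat⟩ : Σ _ : ℤ, ℕ) = ⟨b, e⟩
      rw [Int.toNat_natCast]
    · rintro ⟨a, b, c⟩ hp
      rw [Set.Finite.mem_toFinset] at hp
      obtain ⟨-, -, ha, -⟩ := (hSmem _).1 hp
      simp only at ha
      show a ^ (k - 1) = ((a.toNat : ℕ) : ℤ) ^ (k - 1)
      rw [Int.toNat_of_nonneg ha.le]
end
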